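/- Let D be a bounded open convex subset of ℝᴺ realized as a cross section of an open cone C containing no lines, and let x, y be distinct points of the Euclidean boundary ∂D. Then the reverse-Funk horofunctions ψ_x := r_C(·,x) − r_C(b,x) and ψ_y := r_C(·,y) − r_C(b,y) on C are distinct functions. Consequently, x ↦ ψ_x is injective from ∂D into functions on C. -/

import Mathlib

open Set Filter Topology

variable {V : Type*} [NormedAddCommGroup V] [NormedSpace ℝ V] [FiniteDimensional ℝ V]

/-- An open cone: non-empty, open, convex, invariant under positive scaling, not containing 0. -/
def IsOpenCone (T : Set V) : Prop :=
  T.Nonempty ∧ IsOpen T ∧ Convex ℝ T ∧ (∀ c : ℝ, 0 < c → ∀ u ∈ T, c • u ∈ T) ∧ (0 : V) ∉ T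

/-- The gauge `M_T(y/x) = inf {λ > 0 : λ • x - y ∈ closure T}`. -/
noncomputable def funkM (T : Set V) (y x : V) : ℝ :=
  sInf {l : ℝ | 0 < l ∧ l • x - y ∈ closure T}

/-- The Funk metric `F_T(x,y) = log inf {λ > 0 : λ • y - x ∈ closure T}`. -/
noncomputable def funkF (T : Set V) (x y : V) : ℝ := Real.log (funkM T x y)

/-- The reverse Funk metric `r_T(x,y) = F_T(y,x)`. -/
noncomputable def revF (T : Set V) (x y : V) : ℝ := Real.log (funkM T y x)

/-- The Hilbert metric as the symmetrisation of the Funk metric. -/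
noncomputable def hilD (T : Set V) (x y : V) : ℝ := funkF T x y + revF T x y

/-- The dual cone, as a set of continuous linear functionals. -/
def dualCone (T : Set V) : Set (V →L[ℝ] ℝ) := {z | ∀ u ∈ T, 0 ≤ z u}

/-- The open tangent cone `τ(T,x) = {λ (w - x) : λ > 0, w ∈ T}`. -/
def openTangent (T : Set V) (x : V) : Set V :=
  {v | ∃ l : ℝ, 0 < l ∧ ∃ w ∈ T, v = l • (w - x)}

/-!
Write `M(w, u) = funkM C w u`, so that `revF C u w = log M(w, u)`. Equality of the horofunctions
of `p` and `q` says that `M(q, ·) = k • M(p, ·)` on `C` for the constant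
`k = exp (revF C b q - revF C b p)`. At `u = p + s • b` we have `M(p, u) ≤ 1`, hence
`M(q, u) ≤ k`, i.e. `k • p + (k * s) • b - q ∈ closure C`; letting `s → 0` gives
`k • p - q ∈ closure C`. The same argument with `p` and `q` exchanged puts `q - k • p` in
`closure C` as well, so `q = k • p` because `closure C` contains no line, and the normalisation
`ψ p = ψ q = 1` forces `k = 1`.
-/

section

variable {E : Type*} [NormedAddCommGroup E] [NormedSpace ℝ E] {C : Set E}

lemma IsOpenCone.isOpen (hC : IsOpenCone C) : IsOpen C := hC.2.1

lemma IsOpenCone.convex (hC : IsOpenCone C) : Convex ℝ C := hC.2.2.1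

lemma IsOpenCone.smul_mem (hC : IsOpenCone C) {k : ℝ} (hk : 0 < k) {u : E} (hu : u ∈ C) :
    k • u ∈ C :=
  hC.2.2.2.1 k hk u hu

lemma IsOpenCone.add_mem_of_mem_closure (hC : IsOpenCone C) {u w : E} (hu : u ∈ closure C)
    (hw : w ∈ C) : u + w ∈ C := by
  have hmid : (1 / 2 : ℝ) • u + (1 / 2 : ℝ) • w ∈ C := by
    simpa only [hC.isOpen.interior_eq] using hC.convex.combo_closure_interior_mem_interior hu
      (hC.isOpen.interior_eq.symm ▸ hw) (by norm_num : (0 : ℝ) ≤ 1 / 2) (by norm_num) (by norm_num)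
  convert hC.smul_mem two_pos hmid using 1
  module

def IsOpenCone.toConvexCone (hC : IsOpenCone C) : ConvexCone ℝ E where
  carrier := C
  smul_mem' _ hk _ hu := hC.smul_mem hk hu
  add_mem' _ hu _ hw := hC.add_mem_of_mem_closure (subset_closure hu) hw

lemma IsOpenCone.add_mem_closure (hC : IsOpenCone C) {u w : E} (hu : u ∈ closure C)
    (hw : w ∈ closure C) : u + w ∈ closure C :=
  hC.toConvexCone.closure.add_mem hu hw

lemma IsOpenCone.smul_mem_closure (hC : IsOpenCone C) {k : ℝ} (hk : 0 < k) {u : E}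
    (hu : u ∈ closure C) : k • u ∈ closure C :=
  hC.toConvexCone.closure.smul_mem hk hu

lemma funkM_nonneg (w u : E) : 0 ≤ funkM C w u :=
  Real.sInf_nonneg fun _ hl => hl.1.le

lemma funkM_le_of_smul_sub_mem {w u : E} {l : ℝ} (hl : 0 < l) (h : l • u - w ∈ closure C) :
    funkM C w u ≤ l :=
  csInf_le ⟨0, fun _ hl' => hl'.1.le⟩ ⟨hl, h⟩

lemma exists_smul_sub_mem_of_mem (hC : IsOpenCone C) (w : E) {u : E} (hu : u ∈ C) :
    ∃ l : ℝ, 0 < l ∧ l • u - w ∈ C := by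
  have hlim : Tendsto (fun l : ℝ => u - l⁻¹ • w) atTop (𝓝 u) := by
    simpa using tendsto_const_nhds.sub ((tendsto_inv_atTop_zero (𝕜 := ℝ)).smul_const w)
  obtain ⟨l, hlC, hl⟩ :=
    ((hlim.eventually (hC.isOpen.mem_nhds hu)).and (eventually_gt_atTop 0)).exists
  refine ⟨l, hl, ?_⟩
  convert hC.smul_mem hl hlC using 1
  rw [smul_sub, smul_inv_smul₀ hl.ne']

lemma smul_sub_mem_closure_of_funkM_lt (hC : IsOpenCone C) {w u : E} (hu : u ∈ C) {l : ℝ}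
    (hl : funkM C w u < l) : l • u - w ∈ closure C := by
  have hne : {l : ℝ | 0 < l ∧ l • u - w ∈ closure C}.Nonempty :=
    let ⟨l', hl', h⟩ := exists_smul_sub_mem_of_mem hC w hu
    ⟨l', hl', subset_closure h⟩
  obtain ⟨l₀, ⟨-, hl₀⟩, hlt⟩ := exists_lt_of_csInf_lt hne hl
  convert hC.add_mem_closure hl₀ (subset_closure (hC.smul_mem (sub_pos.2 hlt) hu)) using 1
  module

lemma smul_sub_mem_closure_of_funkM_le (hC : IsOpenCone C) {w u : E} (hu : u ∈ C) {l : ℝ}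
    (hl : funkM C w u ≤ l) : l • u - w ∈ closure C := by
  have hlim : Tendsto (fun s : ℝ => (l + s) • u - w) (𝓝[>] 0) (𝓝 (l • u - w)) := by
    refine tendsto_nhdsWithin_of_tendsto_nhds (Continuous.tendsto' ?_ _ _ (by simp))
    fun_prop
  exact isClosed_closure.mem_of_tendsto hlim <| eventually_nhdsWithin_of_forall fun s hs =>
    smul_sub_mem_closure_of_funkM_lt hC hu (by linarith [Set.mem_Ioi.1 hs])

lemma funkM_pos (hC : IsOpenCone C) (hlines : ∀ v, v ∈ closure C → -v ∈ closure C → v = 0)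
    {w u : E} (hw : w ∈ closure C) (hw0 : w ≠ 0) (hu : u ∈ C) : 0 < funkM C w u := by
  refine (funkM_nonneg w u).lt_of_ne fun h => hw0 (hlines w hw ?_)
  simpa using smul_sub_mem_closure_of_funkM_le hC hu h.ge

lemma funkM_eq_exp_mul_of_horofunction_eq (hC : IsOpenCone C)
    (hlines : ∀ v, v ∈ closure C → -v ∈ closure C → v = 0) {b p q : E}
    (hp : p ∈ closure C) (hp0 : p ≠ 0) (hq : q ∈ closure C) (hq0 : q ≠ 0)
    (hpq : ∀ u ∈ C, revF C u p - revF C b p = revF C u q - revF C b q) {u : E} (hu : u ∈ C) :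
    funkM C q u = Real.exp (revF C b q - revF C b p) * funkM C p u := by
  simp only [revF] at hpq ⊢
  have hlog : Real.log (funkM C q u) =
      Real.log (funkM C p u) + (Real.log (funkM C q b) - Real.log (funkM C p b)) := by
    linarith [hpq u hu]
  rw [← Real.exp_log (funkM_pos hC hlines hq hq0 hu), hlog, Real.exp_add,
    Real.exp_log (funkM_pos hC hlines hp hp0 hu), mul_comm]

lemma exp_smul_sub_mem_closure_of_horofunction_eq (hC : IsOpenCone C)
    (hlines : ∀ v, v ∈ closure C → -v ∈ closure C → v = 0) {b p q : E} (hb : b ∈ C)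
    (hp : p ∈ closure C) (hp0 : p ≠ 0) (hq : q ∈ closure C) (hq0 : q ≠ 0)
    (hpq : ∀ u ∈ C, revF C u p - revF C b p = revF C u q - revF C b q) :
    Real.exp (revF C b q - revF C b p) • p - q ∈ closure C := by
  set k := Real.exp (revF C b q - revF C b p)
  have hmem : ∀ s : ℝ, 0 < s → k • p + (k * s) • b - q ∈ closure C := by
    intro s hs
    have hu : p + s • b ∈ C := hC.add_mem_of_mem_closure hp (hC.smul_mem hs hb)
    have hle : funkM C q (p + s • b) ≤ k := by
      rw [funkM_eq_exp_mul_of_horofunction_eq hC hlines hp hp0 hq hq0 hpq hu]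
      refine mul_le_of_le_one_right (Real.exp_pos _).le (funkM_le_of_smul_sub_mem one_pos ?_)
      simpa using subset_closure (hC.smul_mem hs hb)
    simpa only [smul_add, smul_smul] using smul_sub_mem_closure_of_funkM_le hC hu hle
  have hlim : Tendsto (fun s : ℝ => k • p + (k * s) • b - q) (𝓝[>] 0) (𝓝 (k • p - q)) := by
    refine tendsto_nhdsWithin_of_tendsto_nhds (Continuous.tendsto' ?_ _ _ (by simp))
    fun_prop
  exact isClosed_closure.mem_of_tendsto hlim (eventually_nhdsWithin_of_forall hmem)

lemma eq_exp_smul_of_horofunction_eq (hC : IsOpenCone C)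
    (hlines : ∀ v, v ∈ closure C → -v ∈ closure C → v = 0) {b p q : E} (hb : b ∈ C)
    (hp : p ∈ closure C) (hp0 : p ≠ 0) (hq : q ∈ closure C) (hq0 : q ≠ 0)
    (hpq : ∀ u ∈ C, revF C u p - revF C b p = revF C u q - revF C b q) :
    q = Real.exp (revF C b q - revF C b p) • p := by
  set d := revF C b q - revF C b p
  have hpq' := exp_smul_sub_mem_closure_of_horofunction_eq hC hlines hb hp hp0 hq hq0 hpq
  have hqp := exp_smul_sub_mem_closure_of_horofunction_eq hC hlines hb hq hq0 hp hp0
    fun u hu => (hpq u hu).symm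
  have hneg : -(Real.exp d • p - q) ∈ closure C := by
    convert hC.smul_mem_closure (Real.exp_pos d) hqp using 1
    rw [smul_sub, smul_smul, ← Real.exp_add, show d + (revF C b p - revF C b q) = 0 by ring,
      Real.exp_zero, one_smul, neg_sub]
  exact (sub_eq_zero.1 (hlines _ hpq' hneg)).symm

end

theorem revF_horofunction_injective_general (C : Set V) (hC : IsOpenCone C)
    (hlines : ∀ v, v ∈ closure C → -v ∈ closure C → v = 0)
    (ψ : V →L[ℝ] ℝ)
    (D : Set V) (hD : D = {u | u ∈ C ∧ ψ u = 1})
    (b : V) (hb : b ∈ D)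
    (x : V) (hx : x ∈ closure D \ D) (y : V) (hy : y ∈ closure D \ D)
    (hxy : ∀ u ∈ C, revF C u x - revF C b x = revF C u y - revF C b y) :
    x = y := by
  subst hD
  have hcl : closure {u | u ∈ C ∧ ψ u = 1} ⊆ closure C ∩ {u | ψ u = 1} :=
    closure_minimal (fun u hu => ⟨subset_closure hu.1, hu.2⟩)
      (isClosed_closure.inter (isClosed_eq ψ.continuous continuous_const))
  have hne : ∀ {u : V}, ψ u = 1 → u ≠ 0 := fun h h0 => by simp [h0] at h
  obtain ⟨hxC, hx1⟩ := hcl hx.1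
  obtain ⟨hyC, hy1⟩ := hcl hy.1
  have hyx := eq_exp_smul_of_horofunction_eq hC hlines hb.1 hxC (hne hx1) hyC (hne hy1) hxy
  have hk : Real.exp (revF C b y - revF C b x) = 1 := by
    have h := congrArg ψ hyx
    rwa [map_smul, hx1, hy1, smul_eq_mul, mul_one, eq_comm] at h
  rw [hyx, hk, one_smul]

/-- distinct boundary points of a cross section of a cone containing no
lines give distinct reverse-Funk horofunctions. -/
theorem revF_horofunction_injective (C : Set V) (hC : IsOpenCone C)
    (hlines : ∀ v, v ∈ closure C → -v ∈ closure C → v = 0)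
    (ψ : V →L[ℝ] ℝ) (hψ : ∀ u ∈ closure C, u ≠ 0 → 0 < ψ u)
    (D : Set V) (hD : D = {u | u ∈ C ∧ ψ u = 1}) (hDb : Bornology.IsBounded D)
    (b : V) (hb : b ∈ D)
    (x : V) (hx : x ∈ closure D \ D) (y : V) (hy : y ∈ closure D \ D)
    (hxy : ∀ u ∈ C, revF C u x - revF C b x = revF C u y - revF C b y) :
    x = y :=
  revF_horofunction_injective_general C hC hlines ψ D hD b hb x hx y hy hxy
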